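/- arXiv:2109.13106 — 2 statements merged into one kernel-verified Lean document; each statement's English description precedes it below -/
import Mathlib

section
/- Let d be a positive even integer. For i = 1, …, d+1 and t ∈ ℝ, define q_i(t) = (1 − t)·e_i + t·e_{i+1} ∈ ℝ^{d+1}, where e₁, …, e_{d+1} is the standard basis and indices are cyclic (e_{d+2} = e₁). Then for every t ∈ ℝ, the vectors q₁(t), …, q_{d+1}(t) are linearly independent. Consequently, at no time t do all d+1 moving points q_i(t), which all lie in the affine hyperplane {x ∈ ℝ^{d+1} : Σ_j x_j = 1}, lie in a common (d−1)-dimensional affine subspace of that hyperplane. -/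
open Module
open Fin.NatCast

/-!
If `∑ i, g i • q i t = 0`, the coordinate `j + 1` gives `(1 - t) g_{j+1} = -t g_j`, and going
once around the cycle of length `d + 1` gives `(1 - t)^(d+1) g_j = (-t)^(d+1) g_j`. As `d + 1` is
odd, `x ↦ x^(d+1)` is injective on `ℝ`, and `1 - t ≠ -t`, so `g = 0`. Linearly independent
points are affinely independent, and `d + 1` affinely independent points span a
`d`-dimensional affine subspace, so they cannot lie in one of dimension `d - 1`.
-/

section CyclicRecurrence

variable {R : Type*} [CommRing R] {n : ℕ} [NeZero n]

theorem pow_mul_apply_add_of_cyclic_recurrence {a c : R} {g : Fin n → R}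
    (h : ∀ j, a * g (j + 1) = c * g j) (j : Fin n) (k : ℕ) :
    a ^ k * g (j + k) = c ^ k * g j := by
  induction k with
  | zero => simp
  | succ k ih =>
    calc a ^ (k + 1) * g (j + (k + 1 : ℕ)) = a ^ k * (a * g (j + k + 1)) := by
          rw [Nat.cast_succ, ← add_assoc, pow_succ']; ring
      _ = c ^ (k + 1) * g j := by rw [h, mul_left_comm, ih]; ring

theorem eq_zero_of_cyclic_recurrence [IsDomain R] {a c : R} {g : Fin n → R}
    (h : ∀ j, a * g (j + 1) = c * g j) (hac : a ^ n ≠ c ^ n) : g = 0 := by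
  funext j
  have hcycle := pow_mul_apply_add_of_cyclic_recurrence h j n
  rw [Fin.natCast_self, add_zero] at hcycle
  by_contra hj
  exact hac (mul_right_cancel₀ hj hcycle)

theorem linearIndependent_smul_single_add_smul_single_succ [IsDomain R] {a b : R}
    (hab : a ^ n ≠ (-b) ^ n) :
    LinearIndependent R (fun i : Fin n => a • Pi.single i 1 + b • Pi.single (i + 1) 1 :
      Fin n → Fin n → R) := by
  rw [Fintype.linearIndependent_iff]
  intro g hg
  refine congrFun (eq_zero_of_cyclic_recurrence (a := a) (c := -b) (fun j => ?_) hab)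
  have hcoord := congrFun hg (j + 1)
  simp only [smul_add, Finset.sum_apply, Pi.add_apply, Pi.smul_apply, Pi.single_apply,
    smul_eq_mul, mul_ite, mul_one, mul_zero, add_left_inj, Finset.sum_add_distrib,
    Finset.sum_ite_eq, Finset.mem_univ, ↓reduceIte, Pi.zero_apply] at hcoord
  linear_combination hcoord

end CyclicRecurrence

theorem AffineIndependent.card_le_finrank_direction_add_one {k V P ι : Type*} [DivisionRing k]
    [AddCommGroup V] [Module k V] [AddTorsor V P] [FiniteDimensional k V] [Fintype ι]
    [Nonempty ι] {p : ι → P} (hp : AffineIndependent k p) {L : AffineSubspace k P}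
    (hL : ∀ i, p i ∈ L) : Fintype.card ι ≤ finrank k L.direction + 1 := by
  rw [← hp.finrank_vectorSpan_add_one, add_le_add_iff_right,
    AffineSubspace.direction_eq_vectorSpan]
  exact Submodule.finrank_mono (vectorSpan_mono k (Set.range_subset_iff.2 hL))

/-- For even `d`, the `d+1` moving points `q_i(t) = (1-t)e_i + t e_{i+1}` (cyclic indices) in
`ℝ^{d+1}` are linearly independent for every time `t`; consequently, they all lie in the
affine hyperplane `{x : Σ_j x_j = 1}` but at no time do they lie in a common
`(d-1)`-dimensional affine subspace of that hyperplane. -/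
theorem moving_points_never_coplanar (d : ℕ) (hd : 1 ≤ d) (heven : Even d)
    (q : Fin (d + 1) → ℝ → EuclideanSpace ℝ (Fin (d + 1)))
    (hq : ∀ i t, q i t = (1 - t) • EuclideanSpace.single i (1 : ℝ)
      + t • EuclideanSpace.single (i + 1) (1 : ℝ)) :
    ∀ t : ℝ,
      LinearIndependent ℝ (fun i => q i t) ∧
      (∀ i, (∑ j, q i t j) = 1) ∧
      ¬ ∃ L : AffineSubspace ℝ (EuclideanSpace ℝ (Fin (d + 1))),
          finrank ℝ L.direction = d - 1 ∧
          (L : Set (EuclideanSpace ℝ (Fin (d + 1)))) ⊆ {x | (∑ j, x j) = 1} ∧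
          ∀ i, q i t ∈ L := by
  intro t
  have hpow : (1 - t) ^ (d + 1) ≠ (-t) ^ (d + 1) := fun h => by
    have := heven.add_one.pow_injective h
    linarith
  have hli : LinearIndependent ℝ (fun i => q i t) := by
    have hqt : (fun i => q i t) = (WithLp.linearEquiv 2 ℝ (Fin (d + 1) → ℝ)).symm ∘
        fun i => (1 - t) • Pi.single i 1 + t • Pi.single (i + 1) 1 := by
      ext i : 1
      simp [hq]
    rw [hqt]
    exact (linearIndependent_smul_single_add_smul_single_succ hpow).map' _ (LinearEquiv.ker _)
  refine ⟨hli, fun i => ?_, ?_⟩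
  · simp [hq, Finset.sum_add_distrib]
  · rintro ⟨L, hdim, -, hmem⟩
    have hcard := hli.affineIndependent.card_le_finrank_direction_add_one hmem
    rw [Fintype.card_fin, hdim] at hcard
    omega
end

section
/- Let d ≥ 1 and let μ be a finite measure on ℝ^d. Then there exists a point x ∈ ℝ^d such that every closed half-space of ℝ^d containing x has μ-measure at least μ(ℝ^d)/(d+1). -/
open MeasureTheory
open scoped RealInnerProductSpace ENNReal

/-!
Call a closed convex set light if its complement has measure `< μ(ℝ^d)/(d+1)`. Any `d + 1` light
sets together miss less than `μ(ℝ^d)`, so they meet; by Helly's theorem any finitely many meet, and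
since a large closed ball is light, compactness gives a point `x` common to all light closed
half-spaces. If a closed half-space `{ℓ ≥ c}` through `x` had measure `< μ(ℝ^d)/(d+1)`, continuity
of `μ` from above would keep it so after lowering `c` to some `c' < c`; then `{ℓ ≤ c'}` is light,
so `ℓ x ≤ c' < c`, which is absurd.
-/

open Set Module Filter Topology Finset

theorem nonempty_biInter_of_sum_measure_compl_lt {α ι : Type*} [MeasurableSpace α]
    {μ : Measure α} {F : ι → Set α} {s : Finset ι} (h : ∑ i ∈ s, μ (F i)ᶜ < μ univ) :
    (⋂ i ∈ s, F i).Nonempty := by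
  by_contra hempty
  rw [Set.not_nonempty_iff_eq_empty, ← compl_inj_iff, compl_empty, compl_iInter₂] at hempty
  refine h.not_ge ?_
  calc μ univ = μ (⋃ i ∈ s, (F i)ᶜ) := by rw [hempty]
    _ ≤ ∑ i ∈ s, μ (F i)ᶜ := measure_biUnion_finset_le s _

theorem exists_lt_measure_setOf_le_lt {α : Type*} [MeasurableSpace α] {μ : Measure α}
    [IsFiniteMeasure μ] {f : α → ℝ} (hf : AEMeasurable f μ) {c : ℝ} {a : ℝ≥0∞}
    (h : μ {y | c ≤ f y} < a) : ∃ c' < c, μ {y | c' ≤ f y} < a := by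
  have hIcc : {y | c ≤ f y} = ⋂ r > (0 : ℝ), {y | c - r ≤ f y} := by
    ext y
    simp only [mem_ofPred_eq, mem_iInter]
    exact ⟨fun h r _ => by linarith,
      fun h => le_of_forall_pos_le_add fun r hr => by linarith [h r hr]⟩
  have hlim : Tendsto (fun r => μ {y | c - r ≤ f y}) (𝓝[>] 0) (𝓝 (μ {y | c ≤ f y})) := by
    rw [hIcc]
    exact tendsto_measure_biInter_gt (fun r _ => nullMeasurableSet_le aemeasurable_const hf)
      (fun r r' _ hr' y (hy : c - r ≤ f y) => show c - r' ≤ f y by linarith)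
      ⟨1, one_pos, measure_ne_top _ _⟩
  obtain ⟨r, hr, hr0⟩ := ((hlim.eventually (gt_mem_nhds h)).and self_mem_nhdsWithin).exists
  exact ⟨c - r, sub_lt_self c hr0, hr⟩

section Helly

variable {ι E : Type*} [AddCommGroup E] [Module ℝ E] [FiniteDimensional ℝ E] [MeasurableSpace E]

theorem nonempty_biInter_of_measure_compl_lt {μ : Measure E} {F : ι → Set E} {s : Finset ι}
    (hconv : ∀ i ∈ s, Convex ℝ (F i))
    (hsmall : ∀ i ∈ s, μ (F i)ᶜ < μ univ / (finrank ℝ E + 1 : ℕ)) :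
    (⋂ i ∈ s, F i).Nonempty := by
  refine Convex.helly_theorem' hconv fun I hIs hIcard => ?_
  obtain rfl | hI := I.eq_empty_or_nonempty
  · simp
  refine nonempty_biInter_of_sum_measure_compl_lt (μ := μ) ?_
  calc ∑ i ∈ I, μ (F i)ᶜ < ∑ _i ∈ I, μ univ / (finrank ℝ E + 1 : ℕ) :=
        ENNReal.sum_lt_sum_of_nonempty hI fun i hi => hsmall i (hIs hi)
    _ = #I * (μ univ / (finrank ℝ E + 1 : ℕ)) := by rw [sum_const, nsmul_eq_mul]
    _ ≤ (finrank ℝ E + 1 : ℕ) * (μ univ / (finrank ℝ E + 1 : ℕ)) := by gcongr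
    _ = μ univ := ENNReal.mul_div_cancel (by simp) (by simp)

end Helly

section Centerpoint

variable {ι E : Type*} [NormedAddCommGroup E] [NormedSpace ℝ E] [FiniteDimensional ℝ E]
  [MeasurableSpace E] [BorelSpace E]

theorem nonempty_iInter_of_measure_compl_lt (μ : Measure E) [IsFiniteMeasure μ] {F : ι → Set E}
    (hclosed : ∀ i, IsClosed (F i)) (hconv : ∀ i, Convex ℝ (F i))
    (hsmall : ∀ i, μ (F i)ᶜ < μ univ / (finrank ℝ E + 1 : ℕ)) :
    (⋂ i, F i).Nonempty := by
  classical
  rcases isEmpty_or_nonempty ι with _ | ⟨⟨i₀⟩⟩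
  · simp
  obtain ⟨K, hK, hμK⟩ := exists_isCompact_closure_measure_compl_lt μ _ (pos_of_gt (hsmall i₀))
  obtain ⟨r, hKr⟩ := hK.isBounded.subset_closedBall (0 : E)
  have hB : μ (Metric.closedBall (0 : E) r)ᶜ < μ univ / (finrank ℝ E + 1 : ℕ) :=
    (measure_mono (compl_subset_compl.2 (subset_closure.trans hKr))).trans_lt hμK
  by_contra hempty
  have hBF : Metric.closedBall (0 : E) r ∩ ⋂ i, F i = ∅ := by
    rw [Set.not_nonempty_iff_eq_empty.1 hempty, inter_empty]
  obtain ⟨s, hs⟩ := (isCompact_closedBall (0 : E) r).elim_finite_subfamily_closed F hclosed hBF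
  have hfinite := nonempty_biInter_of_measure_compl_lt (μ := μ)
    (F := fun o : Option ι => o.elim (Metric.closedBall (0 : E) r) F)
    (s := insert none (s.image some)) (by simp [convex_closedBall, hconv])
    (by simpa using And.intro hB fun i (_ : i ∈ s) => hsmall i)
  simp [hs] at hfinite

def IsCenterpoint (μ : Measure E) (x : E) : Prop :=
  ∀ (ℓ : E →L[ℝ] ℝ) (c : ℝ), c ≤ ℓ x → μ univ / (finrank ℝ E + 1 : ℕ) ≤ μ {y | c ≤ ℓ y}

theorem exists_isCenterpoint (μ : Measure E) [IsFiniteMeasure μ] : ∃ x, IsCenterpoint μ x := by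
  let ι := {p : (E →L[ℝ] ℝ) × ℝ // μ {y | p.1 y ≤ p.2}ᶜ < μ univ / (finrank ℝ E + 1 : ℕ)}
  obtain ⟨x, hx⟩ :=
    nonempty_iInter_of_measure_compl_lt μ (F := fun p : ι => {y | p.1.1 y ≤ p.1.2})
    (fun p => isClosed_le p.1.1.continuous continuous_const)
    (fun p => convex_halfSpace_le p.1.1.toLinearMap.isLinear _) (fun p => p.2)
  refine ⟨x, fun ℓ c hc => le_of_not_gt fun hlt => ?_⟩
  obtain ⟨c', hc'c, hc'⟩ := exists_lt_measure_setOf_le_lt ℓ.measurable.aemeasurable hlt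
  have hlight : μ {y | ℓ y ≤ c'}ᶜ < μ univ / (finrank ℝ E + 1 : ℕ) :=
    (measure_mono fun y (hy : ¬ ℓ y ≤ c') => (not_le.1 hy).le).trans_lt hc'
  have hxc' : ℓ x ≤ c' := mem_iInter.1 hx ⟨(ℓ, c'), hlight⟩
  linarith

end Centerpoint

theorem centerpoint_general (d : ℕ)
    (μ : Measure (EuclideanSpace ℝ (Fin d))) [IsFiniteMeasure μ] :
    ∃ x : EuclideanSpace ℝ (Fin d),
      ∀ v : EuclideanSpace ℝ (Fin d), v ≠ 0 → ∀ c : ℝ, ⟪x, v⟫ ≥ c →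
        μ {y | ⟪y, v⟫ ≥ c} ≥ μ Set.univ / ((d + 1 : ℕ) : ℝ≥0∞) := by
  obtain ⟨x, hx⟩ := exists_isCenterpoint μ
  refine ⟨x, fun v _ c hc => ?_⟩
  have hxv := hx (innerSL ℝ v) c (by simpa [real_inner_comm] using hc)
  simpa [real_inner_comm, finrank_euclideanSpace_fin] using hxv

/-- **Rado's centerpoint theorem.** Every finite measure on `ℝ^d` has a centerpoint: a point
`x` such that every closed half-space `{y : ⟪y, v⟫ ≥ c}` containing `x` has measure at least
`μ(ℝ^d)/(d+1)`. -/
theorem centerpoint (d : ℕ) (hd : 1 ≤ d)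
    (μ : Measure (EuclideanSpace ℝ (Fin d))) [IsFiniteMeasure μ] :
    ∃ x : EuclideanSpace ℝ (Fin d),
      ∀ v : EuclideanSpace ℝ (Fin d), v ≠ 0 → ∀ c : ℝ, ⟪x, v⟫ ≥ c →
        μ {y | ⟪y, v⟫ ≥ c} ≥ μ Set.univ / ((d + 1 : ℕ) : ℝ≥0∞) :=
  centerpoint_general d μ
end
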